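/- Fix N ≥ 1, m ≥ 1, dimensions n_1,…,n_N ≥ 1, matrices A_i ∈ ℝ^{m×n_i}, b ∈ ℝ^m, Δ > 0, ρ > 0, γ > 0, and ε_1,…,ε_N > 0. Let λ̂, λ̂⁺, λ*, d̂, d̂⁺ ∈ ℝ^m and x_i, x_i⁺ ∈ ℝ^{n_i} satisfy ‖ d̂ − ( Σ_{i=1}^N A_i x_i − b ) ‖ ≤ 2√m·Δ and ‖ d̂⁺ − ( Σ_{i=1}^N A_i x_i⁺ − b ) ‖ ≤ 2√m·Δ. Then (1/γ)·⟨ λ̂ − λ̂⁺ , d̂ − d̂⁺ ⟩ ≤ ( Σ_{i=1}^N ε_i / (2γ²ρ) )·‖λ̂ − λ̂⁺‖² + ½ Σ_{i=1}^N (ρ/ε_i)·‖x_i − x_i⁺‖²_{A_iᵀA_i} + (4√m·Δ/γ)·( ‖λ̂ − λ*‖ + ‖λ̂⁺ − λ*‖ ). -/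

import Mathlib

/-!
Split `d̂ − d̂⁺` into the exact residual difference `∑ᵢ Aᵢ(xᵢ − xᵢ⁺)` and the two quantization
errors. Against each `Aᵢ(xᵢ − xᵢ⁺)`, Cauchy–Schwarz and Young's inequality with weight
`εᵢ/(γρ)` give the first two terms, since `‖Aᵢv‖² = ‖v‖²_{AᵢᵀAᵢ}`. The error part has norm at
most `4√m·Δ`, and `‖λ̂ − λ̂⁺‖ ≤ ‖λ̂ − λ*‖ + ‖λ̂⁺ − λ*‖` by the triangle inequality through `λ*`.
-/

open scoped RealInnerProductSpace

/-- Weighted squared seminorm `‖v‖²_M := vᵀ M v`. -/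
noncomputable def wnormSq {k : ℕ} (M : Matrix (Fin k) (Fin k) ℝ)
    (v : EuclideanSpace ℝ (Fin k)) : ℝ :=
  dotProduct v (M.mulVec v)

lemma wnormSq_transpose_mul_self {m k : ℕ} (A : Matrix (Fin m) (Fin k) ℝ)
    (v : EuclideanSpace ℝ (Fin k)) :
    wnormSq (A.transpose * A) v = ‖(WithLp.toLp 2 (A.mulVec v) : EuclideanSpace ℝ (Fin m))‖ ^ 2 := by
  rw [← real_inner_self_eq_norm_sq, wnormSq, ← Matrix.mulVec_mulVec, Matrix.dotProduct_mulVec,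
    Matrix.vecMul_transpose, EuclideanSpace.inner_eq_star_dotProduct, star_trivial]

section InnerProductSpace

variable {E : Type*} [NormedAddCommGroup E] [InnerProductSpace ℝ E]

lemma real_inner_le_young (u v : E) {δ : ℝ} (hδ : 0 < δ) :
    ⟪u, v⟫ ≤ δ / 2 * ‖u‖ ^ 2 + 1 / (2 * δ) * ‖v‖ ^ 2 := by
  have hsq : 0 ≤ (δ * ‖u‖ - ‖v‖) ^ 2 / (2 * δ) := by positivity
  have hyoung : ‖u‖ * ‖v‖ ≤ δ / 2 * ‖u‖ ^ 2 + 1 / (2 * δ) * ‖v‖ ^ 2 := by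
    rw [← sub_nonneg]
    convert hsq using 1
    field_simp
    ring
  exact (real_inner_le_norm u v).trans hyoung

lemma inner_sum_le_young {ι : Type*} [Fintype ι] (w : E) (u : ι → E) {γ ρ : ℝ} (ε : ι → ℝ)
    (hγ : 0 < γ) (hρ : 0 < ρ) (hε : ∀ i, 0 < ε i) :
    (1 / γ) * ⟪w, ∑ i, u i⟫
      ≤ (∑ i, ε i) / (2 * γ ^ 2 * ρ) * ‖w‖ ^ 2 + 1 / 2 * ∑ i, ρ / ε i * ‖u i‖ ^ 2 := by
  have hterm : ∀ i, (1 / γ) * ⟪w, u i⟫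
      ≤ ε i / (2 * γ ^ 2 * ρ) * ‖w‖ ^ 2 + 1 / 2 * (ρ / ε i * ‖u i‖ ^ 2) := by
    intro i
    have hδ : 0 < ε i / (γ * ρ) := div_pos (hε i) (mul_pos hγ hρ)
    calc (1 / γ) * ⟪w, u i⟫
        ≤ (1 / γ) * (ε i / (γ * ρ) / 2 * ‖w‖ ^ 2 + 1 / (2 * (ε i / (γ * ρ))) * ‖u i‖ ^ 2) :=
          mul_le_mul_of_nonneg_left (real_inner_le_young _ _ hδ) (by positivity)
      _ = ε i / (2 * γ ^ 2 * ρ) * ‖w‖ ^ 2 + 1 / 2 * (ρ / ε i * ‖u i‖ ^ 2) := by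
          field_simp [(hε i).ne']
  calc (1 / γ) * ⟪w, ∑ i, u i⟫ = ∑ i, (1 / γ) * ⟪w, u i⟫ := by rw [inner_sum, Finset.mul_sum]
    _ ≤ _ := Finset.sum_le_sum fun i _ => hterm i
    _ = _ := by rw [Finset.sum_add_distrib, ← Finset.sum_mul, ← Finset.mul_sum, Finset.sum_div]

lemma inner_sub_le_of_norm_le (a a' c e e' : E) {η : ℝ} (he : ‖e‖ ≤ η) (he' : ‖e'‖ ≤ η) :
    ⟪a - a', e - e'⟫ ≤ 2 * η * (‖a - c‖ + ‖a' - c‖) := by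
  have ha : ‖a - a'‖ ≤ ‖a - c‖ + ‖a' - c‖ := by
    simpa using norm_sub_le (a - c) (a' - c)
  have he'' : ‖e - e'‖ ≤ 2 * η := by linarith [norm_sub_le e e']
  calc ⟪a - a', e - e'⟫ ≤ ‖a - a'‖ * ‖e - e'‖ := real_inner_le_norm _ _
    _ ≤ (‖a - c‖ + ‖a' - c‖) * (2 * η) := by gcongr
    _ = _ := mul_comm _ _

end InnerProductSpace

lemma sum_mulVec_sub_sum_mulVec {ι : Type*} [Fintype ι] {m : ℕ} {n : ι → ℕ}
    (A : ∀ i, Matrix (Fin m) (Fin (n i)) ℝ) (b : EuclideanSpace ℝ (Fin m))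
    (x xp : ∀ i, EuclideanSpace ℝ (Fin (n i))) :
    (∑ i, (WithLp.toLp 2 ((A i).mulVec (x i)) : EuclideanSpace ℝ (Fin m))) - b
        - ((∑ i, (WithLp.toLp 2 ((A i).mulVec (xp i)) : EuclideanSpace ℝ (Fin m))) - b)
      = ∑ i, (WithLp.toLp 2 ((A i).mulVec (x i - xp i)) : EuclideanSpace ℝ (Fin m)) := by
  rw [sub_sub_sub_cancel_right, ← Finset.sum_sub_distrib]
  simp only [Matrix.mulVec_sub, WithLp.toLp_sub]

theorem term_b_bound_general
    (N m : ℕ)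
    (n : Fin N → ℕ)
    (A : ∀ i, Matrix (Fin m) (Fin (n i)) ℝ)
    (b : EuclideanSpace ℝ (Fin m))
    (Δ ρ γ : ℝ) (hρ : 0 < ρ) (hγ : 0 < γ)
    (ε : Fin N → ℝ) (hε : ∀ i, 0 < ε i)
    (lamHat lamHatP lamStar dHat dHatP : EuclideanSpace ℝ (Fin m))
    (x xp : ∀ i, EuclideanSpace ℝ (Fin (n i)))
    (hd : ‖dHat - ((∑ i, (show EuclideanSpace ℝ (Fin m) from WithLp.toLp 2 ((A i).mulVec (x i)))) - b)‖
            ≤ 2 * Real.sqrt m * Δ)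
    (hdP : ‖dHatP - ((∑ i, (show EuclideanSpace ℝ (Fin m) from WithLp.toLp 2 ((A i).mulVec (xp i)))) - b)‖
            ≤ 2 * Real.sqrt m * Δ) :
    (1 / γ) * ⟪lamHat - lamHatP, dHat - dHatP⟫
      ≤ ((∑ i, ε i) / (2 * γ ^ 2 * ρ)) * ‖lamHat - lamHatP‖ ^ 2
        + (1 / 2) * ∑ i, (ρ / ε i) * wnormSq ((A i).transpose * A i) (x i - xp i)
        + (4 * Real.sqrt m * Δ / γ) * (‖lamHat - lamStar‖ + ‖lamHatP - lamStar‖) := by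
  set r : EuclideanSpace ℝ (Fin m) := (∑ i, WithLp.toLp 2 ((A i).mulVec (x i))) - b
  set rP : EuclideanSpace ℝ (Fin m) := (∑ i, WithLp.toLp 2 ((A i).mulVec (xp i))) - b
  have hsplit : dHat - dHatP
      = ∑ i, (WithLp.toLp 2 ((A i).mulVec (x i - xp i)) : EuclideanSpace ℝ (Fin m))
        + ((dHat - r) - (dHatP - rP)) := by
    rw [← sum_mulVec_sub_sum_mulVec]
    simp only [r, rP]
    abel
  have herr : (1 / γ) * ⟪lamHat - lamHatP, (dHat - r) - (dHatP - rP)⟫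
      ≤ (4 * Real.sqrt m * Δ / γ) * (‖lamHat - lamStar‖ + ‖lamHatP - lamStar‖) := by
    calc _ ≤ (1 / γ) * (2 * (2 * Real.sqrt m * Δ) * (‖lamHat - lamStar‖ + ‖lamHatP - lamStar‖)) :=
          mul_le_mul_of_nonneg_left (inner_sub_le_of_norm_le _ _ _ _ _ hd hdP) (by positivity)
      _ = _ := by ring
  rw [hsplit, inner_add_right, mul_add]
  simp only [wnormSq_transpose_mul_self]
  exact add_le_add (inner_sum_le_young _ _ ε hγ hρ hε) herr

/-- **Bound (22)–(23) on term (b).**  If the quantized estimates `d̂, d̂⁺` of the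
global constraint residuals are each accurate to within `2√m·Δ`, then
`(1/γ)⟨λ̂ − λ̂⁺, d̂ − d̂⁺⟩ ≤ (∑_i ε_i/(2γ²ρ))‖λ̂ − λ̂⁺‖²
  + ½∑_i (ρ/ε_i)‖x_i − x_i⁺‖²_{A_iᵀA_i} + (4√m·Δ/γ)(‖λ̂ − λ*‖ + ‖λ̂⁺ − λ*‖)`. -/
theorem term_b_bound
    (N m : ℕ) (hN : 1 ≤ N) (hm : 1 ≤ m)
    (n : Fin N → ℕ) (hn : ∀ i, 1 ≤ n i)
    (A : ∀ i, Matrix (Fin m) (Fin (n i)) ℝ)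
    (b : EuclideanSpace ℝ (Fin m))
    (Δ ρ γ : ℝ) (hΔ : 0 < Δ) (hρ : 0 < ρ) (hγ : 0 < γ)
    (ε : Fin N → ℝ) (hε : ∀ i, 0 < ε i)
    (lamHat lamHatP lamStar dHat dHatP : EuclideanSpace ℝ (Fin m))
    (x xp : ∀ i, EuclideanSpace ℝ (Fin (n i)))
    (hd : ‖dHat - ((∑ i, (show EuclideanSpace ℝ (Fin m) from WithLp.toLp 2 ((A i).mulVec (x i)))) - b)‖
            ≤ 2 * Real.sqrt m * Δ)
    (hdP : ‖dHatP - ((∑ i, (show EuclideanSpace ℝ (Fin m) from WithLp.toLp 2 ((A i).mulVec (xp i)))) - b)‖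
            ≤ 2 * Real.sqrt m * Δ) :
    (1 / γ) * ⟪lamHat - lamHatP, dHat - dHatP⟫
      ≤ ((∑ i, ε i) / (2 * γ ^ 2 * ρ)) * ‖lamHat - lamHatP‖ ^ 2
        + (1 / 2) * ∑ i, (ρ / ε i) * wnormSq ((A i).transpose * A i) (x i - xp i)
        + (4 * Real.sqrt m * Δ / γ) * (‖lamHat - lamStar‖ + ‖lamHatP - lamStar‖) :=
  term_b_bound_general N m n A b Δ ρ γ hρ hγ ε hε lamHat lamHatP lamStar dHat dHatP x xp hd hdP
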